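/- Under the Dawid–Skene model with a decomposable aggregation rule: for all ε, δ ∈ (0,1), setting A = H(ε) + (1/N)·ln(1/δ) with H(ε) = −ε·ln ε − (1−ε)·ln(1−ε), and C = 1 + exp(A/ε), if t̄ ≥ sqrt(2·ln((L−1)·C)), then the error rate satisfies E_N ≤ ε with probability at least 1 − δ. -/

import Mathlib

open MeasureTheory ProbabilityTheory Real

noncomputable section

namespace CrowdDS

/-- Conditional law of the label `Z i j` (valued in `Fin (L+1)`, `0` = missing) given the
true label `y j = k`, under the general Dawid–Skene model with assignment probabilities `q`
and confusion matrices `p` (where `p i k h` is the probability of reporting label `h.succ`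
given true label `k`). -/
def condLaw {M N L : ℕ} (q : Fin M → Fin N → ℝ) (p : Fin M → Fin L → Fin L → ℝ)
    (i : Fin M) (j : Fin N) (k : Fin L) (h : Fin (L + 1)) : ℝ :=
  if hz : h = 0 then 1 - q i j else q i j * p i k (h.pred hz)

/-- The normalizing quantity `N̄`. -/
def nbar {M L : ℕ} (f : Fin M → Fin L → Fin (L + 1) → ℝ) : ℝ :=
  Real.sqrt (∑ i, (sSup {x : ℝ | ∃ k l h : Fin L, k ≠ l ∧
    x = |f i k h.succ - f i l h.succ|}) ^ 2)

/-- Expected gap `Δ_j(k,l)` of the aggregated scores. -/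
def gap {M N L : ℕ} (f : Fin M → Fin L → Fin (L + 1) → ℝ) (a : Fin L → ℝ)
    (q : Fin M → Fin N → ℝ) (p : Fin M → Fin L → Fin L → ℝ)
    (j : Fin N) (k l : Fin L) : ℝ :=
  (∑ i, ∑ h : Fin L, q i j * (f i k h.succ - f i l h.succ) * p i k h) + (a k - a l)

/-- `τ_j^min`. -/
def tauMin {M N L : ℕ} (f : Fin M → Fin L → Fin (L + 1) → ℝ) (a : Fin L → ℝ)
    (q : Fin M → Fin N → ℝ) (p : Fin M → Fin L → Fin L → ℝ) (j : Fin N) : ℝ :=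
  sInf {x : ℝ | ∃ k l : Fin L, k ≠ l ∧ x = gap f a q p j k l / nbar f}

/-- `τ_j^max`. -/
def tauMax {M N L : ℕ} (f : Fin M → Fin L → Fin (L + 1) → ℝ) (a : Fin L → ℝ)
    (q : Fin M → Fin N → ℝ) (p : Fin M → Fin L → Fin L → ℝ) (j : Fin N) : ℝ :=
  sSup {x : ℝ | ∃ k l : Fin L, k ≠ l ∧ x = gap f a q p j k l / nbar f}

/-- `t̄ = min_j τ_j^min`. -/
def tbar {M N L : ℕ} (f : Fin M → Fin L → Fin (L + 1) → ℝ) (a : Fin L → ℝ)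
    (q : Fin M → Fin N → ℝ) (p : Fin M → Fin L → Fin L → ℝ) : ℝ :=
  sInf {x : ℝ | ∃ j : Fin N, x = tauMin f a q p j}

/-- `t̃ = max_j τ_j^max`. -/
def ttil {M N L : ℕ} (f : Fin M → Fin L → Fin (L + 1) → ℝ) (a : Fin L → ℝ)
    (q : Fin M → Fin N → ℝ) (p : Fin M → Fin L → Fin L → ℝ) : ℝ :=
  sSup {x : ℝ | ∃ j : Fin N, x = tauMax f a q p j}

/-- The constant `c`. -/
def cConst {M L : ℕ} (f : Fin M → Fin L → Fin (L + 1) → ℝ) : ℝ :=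
  (1 / nbar f) * sSup {x : ℝ | ∃ (i : Fin M) (k l h : Fin L), k ≠ l ∧
    x = |f i k h.succ - f i l h.succ|}

/-- The variance proxy `σ²`. -/
def sigmaSq {M N L : ℕ} (f : Fin M → Fin L → Fin (L + 1) → ℝ)
    (q : Fin M → Fin N → ℝ) (p : Fin M → Fin L → Fin L → ℝ) : ℝ :=
  (1 / (nbar f) ^ 2) * sSup {x : ℝ | ∃ (j : Fin N) (k l : Fin L), k ≠ l ∧
    x = ∑ i, ∑ h : Fin L, q i j * (f i k h.succ - f i l h.succ) ^ 2 * p i k h}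

/-- The error rate `E_N`. -/
def errRate {Ω : Type*} {N L : ℕ} (y yhat : Fin N → Ω → Fin L) (ω : Ω) : ℝ :=
  (N : ℝ)⁻¹ * ∑ j, if yhat j ω ≠ y j ω then (1 : ℝ) else 0

/-- `φ(x) = exp(−x²/2)`. -/
def phi (x : ℝ) : ℝ := Real.exp (-x ^ 2 / 2)

/-- Kullback–Leibler divergence between Bernoulli distributions. -/
def klBer (x y : ℝ) : ℝ := x * Real.log (x / y) + (1 - x) * Real.log ((1 - x) / (1 - y))

end CrowdDS

/-!
Fix an item `j`. Its decision can only be wrong if some label `l ≠ y_j` scores at least as high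
as `y_j`. Given `y_j = k` the worker labels are independent with laws `condLaw`, so
`s_j(l) - s_j(k)` is a sum of independent terms, the `i`-th one of range at most twice the spread
of `f_i`, whose mean `-Δ_j(k,l)` is at most `-t̄ N̄`. Hoeffding's inequality bounds the probability
that this sum is nonnegative by `φ(t̄)`, and a union bound over `l` bounds the probability that
item `j` is outranked by `(L - 1) φ(t̄) ≤ 1 / C`.

These events are independent across items and dominate the errors, so the Chernoff bound for
a sum of independent indicators of probability at most `1 / C ≤ ε` gives
`P(N ε ≤ #errors) ≤ exp(-N kl(ε, 1 / C))`, and `C` is chosen so that this is at most `δ`.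
-/

namespace MeasureTheory.Measure

variable {α : Type*} [MeasurableSpace α] [Fintype α]

def weightedDirac (w : α → ℝ) : Measure α := ∑ x, ENNReal.ofReal (w x) • dirac x

instance (w : α → ℝ) : IsFiniteMeasure (weightedDirac w) where
  measure_univ_lt_top := by simp [weightedDirac]

variable {w : α → ℝ}

lemma isProbabilityMeasure_weightedDirac (hw : ∀ x, 0 ≤ w x) (hw1 : ∑ x, w x = 1) :
    IsProbabilityMeasure (weightedDirac w) := by
  constructor
  simp only [weightedDirac, coe_finsetSum, Finset.sum_apply, smul_apply, measure_univ,
    smul_eq_mul, mul_one]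
  rw [← ENNReal.ofReal_sum_of_nonneg fun x _ => hw x, hw1, ENNReal.ofReal_one]

variable [MeasurableSingletonClass α]

lemma weightedDirac_singleton (x : α) : weightedDirac w {x} = ENNReal.ofReal (w x) := by
  classical
  simp [weightedDirac, Set.indicator_apply]

lemma weightedDirac_real_singleton (hw : ∀ x, 0 ≤ w x) (x : α) :
    (weightedDirac w).real {x} = w x := by
  rw [measureReal_def, weightedDirac_singleton, ENNReal.toReal_ofReal (hw x)]

lemma integral_weightedDirac (hw : ∀ x, 0 ≤ w x) (g : α → ℝ) :
    ∫ x, g x ∂weightedDirac w = ∑ x, w x * g x := by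
  simp [integral_fintype .of_finite, weightedDirac_real_singleton hw]

end MeasureTheory.Measure

namespace ProbabilityTheory

lemma measureReal_pi_sum_ge_le {ι : Type*} [Fintype ι] {α : ι → Type*}
    [∀ i, MeasurableSpace (α i)] {ν : ∀ i, Measure (α i)} [∀ i, IsProbabilityMeasure (ν i)]
    {g : ∀ i, α i → ℝ} (hg : ∀ i, Measurable (g i)) {b : ι → ℝ}
    (hgb : ∀ i x, |g i x| ≤ b i) {t : ℝ} (ht : 0 ≤ t) :
    (Measure.pi ν).real {η | (∑ i, ∫ x, g i x ∂ν i) + t ≤ ∑ i, g i (η i)}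
      ≤ exp (-t ^ 2 / (2 * ∑ i, b i ^ 2)) := by
  set X : ∀ i, α i → ℝ := fun i x => g i x - ∫ x, g i x ∂ν i
  have hindep : iIndepFun (fun i η => X i (η i)) (Measure.pi ν) :=
    iIndepFun_pi fun i => ((hg i).sub_const _).aemeasurable
  have hsubG : ∀ i, HasSubgaussianMGF (fun η => X i (η i)) ((‖b i - -b i‖₊ / 2) ^ 2)
      (Measure.pi ν) := by
    intro i
    refine HasSubgaussianMGF.of_map (X := X i) (measurable_pi_apply i).aemeasurable ?_
    rw [(measurePreserving_eval ν i).map_eq]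
    exact hasSubgaussianMGF_of_mem_Icc (hg i).aemeasurable
      (ae_of_all _ fun x => abs_le.mp (hgb i x))
  have hc : ((∑ i, (‖b i - -b i‖₊ / 2) ^ 2 : NNReal) : ℝ) = ∑ i, b i ^ 2 := by
    push_cast
    refine Finset.sum_congr rfl fun i _ => ?_
    rw [Real.norm_eq_abs, sub_neg_eq_add, ← two_mul, abs_mul, abs_two,
      mul_div_cancel_left₀ _ two_ne_zero, sq_abs]
  calc (Measure.pi ν).real {η | (∑ i, ∫ x, g i x ∂ν i) + t ≤ ∑ i, g i (η i)}
      = (Measure.pi ν).real {η | t ≤ ∑ i, X i (η i)} := by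
        congr 1
        ext η
        simp only [X, Set.mem_ofPred_eq, Finset.sum_sub_distrib]
        constructor <;> intro h <;> linarith
    _ ≤ exp (-t ^ 2 / (2 * ∑ i, b i ^ 2)) := by
        have := HasSubgaussianMGF.measure_sum_ge_le_of_iIndepFun hindep (s := Finset.univ)
          (fun i _ => hsubG i) ht
        rwa [hc] at this

variable {Ω : Type*} [MeasurableSpace Ω] {μ : Measure Ω}

lemma mgf_indicator_one [IsProbabilityMeasure μ] {B : Set Ω} (hB : MeasurableSet B) (t : ℝ) :
    mgf (B.indicator 1) μ t = 1 + (exp t - 1) * μ.real B := by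
  have hexp : (fun ω => exp (t * B.indicator 1 ω))
      = fun ω => B.indicator (fun _ => exp t - 1) ω + 1 := by
    ext ω
    by_cases hω : ω ∈ B <;> simp [hω]
  rw [mgf, hexp, integral_add ((integrable_const _).indicator hB) (integrable_const 1),
    integral_indicator_const _ hB]
  simp only [integral_const, probReal_univ, smul_eq_mul]
  ring

lemma measureReal_sum_indicator_ge_le [IsProbabilityMeasure μ] {ι : Type*} [Fintype ι]
    {B : ι → Set Ω} (hB : ∀ i, MeasurableSet (B i))
    (hindep : iIndepFun (fun i => (B i).indicator (1 : Ω → ℝ)) μ) {p : ℝ}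
    (hBp : ∀ i, μ.real (B i) ≤ p) (s : ℝ) {t : ℝ} (ht : 0 ≤ t) :
    μ.real {ω | s ≤ ∑ i, (B i).indicator 1 ω}
      ≤ exp (-t * s) * (1 + (exp t - 1) * p) ^ Fintype.card ι := by
  have hmeas : ∀ i, Measurable ((B i).indicator (1 : Ω → ℝ)) :=
    fun i => measurable_const.indicator (hB i)
  have hint : Integrable (fun ω => exp (t * (∑ i, (B i).indicator 1) ω)) μ :=
    hindep.integrable_exp_mul_sum hmeas fun i _ =>
      integrable_exp_mul_of_mem_Icc (a := 0) (b := 1) (hmeas i).aemeasurable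
        (ae_of_all _ fun ω => by by_cases hω : ω ∈ B i <;> simp [hω])
  have hmgf : ∀ i, mgf ((B i).indicator 1) μ t ≤ 1 + (exp t - 1) * p := fun i => by
    rw [mgf_indicator_one (hB i)]
    gcongr
    · linarith [add_one_le_exp t]
    · exact hBp i
  calc μ.real {ω | s ≤ ∑ i, (B i).indicator 1 ω}
      = μ.real {ω | s ≤ (∑ i, (B i).indicator 1) ω} := by simp only [Finset.sum_apply]
    _ ≤ exp (-t * s) * mgf (∑ i, (B i).indicator 1) μ t :=
        measure_ge_le_exp_mul_mgf s ht hint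
    _ = exp (-t * s) * ∏ i, mgf ((B i).indicator 1) μ t := by
        rw [hindep.mgf_sum hmeas]
    _ ≤ exp (-t * s) * (1 + (exp t - 1) * p) ^ Fintype.card ι := by
        rw [← Finset.card_univ, ← Finset.prod_const]
        gcongr with i
        · exact fun i _ => mgf_nonneg
        · exact hmgf i

lemma iIndepFun.indicator_preimage {ι : Type*} {β : ι → Type*} [∀ i, MeasurableSpace (β i)]
    {T : ∀ i, Ω → β i} (h : iIndepFun T μ) {S : ∀ i, Set (β i)}
    (hS : ∀ i, MeasurableSet (S i)) :
    iIndepFun (fun i => (T i ⁻¹' S i).indicator (1 : Ω → ℝ)) μ := by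
  convert h.comp (fun i => (S i).indicator (1 : β i → ℝ))
    fun i => measurable_one.indicator (hS i) with i
  ext ω
  exact Set.indicator_comp_right (g := (1 : β i → ℝ)) (T i)

lemma one_sub_measureReal_le_of_compl_subset [IsProbabilityMeasure μ] {s t : Set Ω}
    (h : sᶜ ⊆ t) : 1 - μ.real t ≤ μ.real s := by
  have hunion := measureReal_union_le (μ := μ) s sᶜ
  rw [Set.union_compl_self, probReal_univ] at hunion
  linarith [measureReal_mono h (measure_ne_top μ t)]

end ProbabilityTheory

namespace CrowdDS

open Measure

section KullbackLeibler

lemma exp_neg_mul_mul_eq_exp_neg_klBer {ε p : ℝ} (hε0 : 0 < ε) (hε1 : ε < 1) (hp0 : 0 < p)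
    (hp1 : p < 1) {t : ℝ} (ht : t = log (ε * (1 - p) / ((1 - ε) * p))) :
    exp (-t * ε) * (1 + (exp t - 1) * p) = exp (-klBer ε p) := by
  have h1ε : 0 < 1 - ε := by linarith
  have h1p : 0 < 1 - p := by linarith
  have hmgf : 1 + (exp t - 1) * p = exp (log ((1 - p) / (1 - ε))) := by
    rw [exp_log (by positivity), ht, exp_log (by positivity)]
    field_simp
    ring
  rw [hmgf, ← exp_add, klBer, ht, log_div (by positivity) (by positivity),
    log_mul hε0.ne' h1p.ne', log_mul h1ε.ne' hp0.ne', log_div h1p.ne' h1ε.ne',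
    log_div hε0.ne' hp0.ne', log_div h1ε.ne' h1p.ne']
  congr 1
  ring

lemma measureReal_sum_indicator_ge_le_exp_klBer {Ω : Type*} [MeasurableSpace Ω]
    {μ : Measure Ω} [IsProbabilityMeasure μ] {ι : Type*} [Fintype ι] {B : ι → Set Ω}
    (hB : ∀ i, MeasurableSet (B i))
    (hindep : iIndepFun (fun i => (B i).indicator (1 : Ω → ℝ)) μ) {p ε : ℝ} (hp0 : 0 < p)
    (hpε : p ≤ ε) (hε1 : ε < 1) (hBp : ∀ i, μ.real (B i) ≤ p) :
    μ.real {ω | Fintype.card ι * ε ≤ ∑ i, (B i).indicator 1 ω}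
      ≤ exp (-(Fintype.card ι) * klBer ε p) := by
  set t := log (ε * (1 - p) / ((1 - ε) * p)) with ht_def
  have ht : 0 ≤ t := by
    apply log_nonneg
    rw [le_div_iff₀ (by nlinarith)]
    nlinarith
  refine (measureReal_sum_indicator_ge_le hB hindep hBp _ ht).trans_eq ?_
  have hkl := exp_neg_mul_mul_eq_exp_neg_klBer (by linarith) hε1 hp0 (by linarith) ht_def
  calc exp (-t * (Fintype.card ι * ε)) * (1 + (exp t - 1) * p) ^ Fintype.card ι
      = (exp (-t * ε) * (1 + (exp t - 1) * p)) ^ Fintype.card ι := by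
        rw [mul_pow, ← exp_nat_mul]
        ring_nf
    _ = exp (-(Fintype.card ι) * klBer ε p) := by
        rw [hkl, ← exp_nat_mul]
        ring_nf

lemma phi_le_inv_of_sqrt_two_log_le {c t : ℝ} (hc : 0 < c) (ht : sqrt (2 * log c) ≤ t) :
    phi t ≤ c⁻¹ := by
  have hsq := (sqrt_le_iff.mp ht).2
  rw [phi, ← exp_log (inv_pos.mpr hc), log_inv]
  exact exp_le_exp.mpr (by linarith)

variable {N : ℕ} {ε δ C : ℝ}

lemma one_div_le_of_div_le_log (hε0 : 0 < ε) (hε1 : ε < 1) (hδ0 : 0 < δ) (hδ1 : δ ≤ 1)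
    (hC : 0 < C)
    (hA : ((-ε * log ε - (1 - ε) * log (1 - ε)) + (N : ℝ)⁻¹ * log (1 / δ)) / ε ≤ log C) :
    1 / C ≤ ε := by
  have hentropy : 0 ≤ -(1 - ε) * log (1 - ε) :=
    mul_nonneg_of_nonpos_of_nonpos (by linarith) (log_nonpos (by linarith) (by linarith))
  have hconf : 0 ≤ (N : ℝ)⁻¹ * log (1 / δ) :=
    mul_nonneg (by positivity) (log_nonneg (one_le_one_div hδ0 hδ1))
  have hlog : log (1 / ε) ≤ log C := by
    refine le_trans ?_ hA
    rw [le_div_iff₀ hε0, one_div, log_inv]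
    linarith
  rw [log_le_log_iff (by positivity) hC] at hlog
  rwa [div_le_iff₀ hC, mul_comm, ← div_le_iff₀ hε0]

lemma exp_neg_mul_klBer_le (hN : 0 < N) (hε0 : 0 < ε) (hε1 : ε < 1) (hδ0 : 0 < δ)
    (hC : 1 < C)
    (hA : ((-ε * log ε - (1 - ε) * log (1 - ε)) + (N : ℝ)⁻¹ * log (1 / δ)) / ε ≤ log C) :
    exp (-N * klBer ε (1 / C)) ≤ δ := by
  have hC0 : 0 < C := by linarith
  have h1ε : 0 < 1 - ε := by linarith
  have h1C : 0 < 1 - 1 / C := by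
    rw [sub_pos, div_lt_one hC0]
    exact hC
  have hkl : klBer ε (1 / C) = ε * log ε + (1 - ε) * log (1 - ε) + ε * log C
      - (1 - ε) * log (1 - 1 / C) := by
    rw [klBer, div_div_eq_mul_div, div_one, log_mul hε0.ne' hC0.ne', log_div h1ε.ne' h1C.ne']
    ring
  have hlog1C : log (1 - 1 / C) ≤ 0 := log_nonpos h1C.le (by simp; positivity)
  have hNkl : log (1 / δ) ≤ N * klBer ε (1 / C) := by
    rw [← inv_mul_le_iff₀ (by exact_mod_cast hN), hkl]
    nlinarith [(div_le_iff₀ hε0).mp hA, mul_nonneg h1ε.le (neg_nonneg.mpr hlog1C)]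
  rw [one_div, log_inv] at hNkl
  calc exp (-N * klBer ε (1 / C)) ≤ exp (log δ) := exp_le_exp.mpr (by linarith)
    _ = δ := exp_log hδ0

end KullbackLeibler

variable {M N L : ℕ} {f : Fin M → Fin L → Fin (L + 1) → ℝ} {a : Fin L → ℝ}
  {q : Fin M → Fin N → ℝ} {p : Fin M → Fin L → Fin L → ℝ}

def score (f : Fin M → Fin L → Fin (L + 1) → ℝ) (a : Fin L → ℝ) (η : Fin M → Fin (L + 1))
    (k : Fin L) : ℝ :=
  ∑ i, f i k (η i) + a k

def Outranked (f : Fin M → Fin L → Fin (L + 1) → ℝ) (a : Fin L → ℝ) (k : Fin L)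
    (η : Fin M → Fin (L + 1)) : Prop :=
  ∃ l ≠ k, score f a η k ≤ score f a η l

def spread (f : Fin M → Fin L → Fin (L + 1) → ℝ) (i : Fin M) : ℝ :=
  sSup {x : ℝ | ∃ k l h : Fin L, k ≠ l ∧ x = |f i k h.succ - f i l h.succ|}

lemma nbar_eq_sqrt_sum_spread_sq : nbar f = sqrt (∑ i, spread f i ^ 2) := rfl

lemma abs_sub_le_spread {i : Fin M} (hf0 : ∀ k k', f i k 0 = f i k' 0) {k l : Fin L}
    (hkl : k ≠ l) (x : Fin (L + 1)) : |f i k x - f i l x| ≤ spread f i := by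
  have hfin : {x : ℝ | ∃ k l h : Fin L, k ≠ l ∧ x = |f i k h.succ - f i l h.succ|}.Finite :=
    (Set.finite_range fun klh : Fin L × Fin L × Fin L =>
      |f i klh.1 klh.2.2.succ - f i klh.2.1 klh.2.2.succ|).subset
      (by rintro _ ⟨k, l, h, -, rfl⟩; exact ⟨(k, l, h), rfl⟩)
  cases x using Fin.cases with
  | zero =>
    rw [hf0 k l, sub_self, abs_zero]
    exact Real.sSup_nonneg (by rintro _ ⟨-, -, -, -, rfl⟩; exact abs_nonneg _)
  | succ h => exact le_csSup hfin.bddAbove ⟨k, l, h, hkl, rfl⟩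

-- `gap / 0 = 0`, and an empty `sInf` is `0` as well.
lemma tbar_nonpos_of_nbar_eq_zero (h : nbar f = 0) : tbar f a q p ≤ 0 := by
  refine Real.sInf_nonpos fun _ ⟨j, hj⟩ => hj ▸ Real.sInf_nonpos ?_
  rintro _ ⟨k, l, -, rfl⟩
  rw [h, div_zero]

lemma nbar_pos_of_tbar_pos (h : 0 < tbar f a q p) : 0 < nbar f :=
  (sqrt_nonneg _).lt_of_ne' fun h0 => (tbar_nonpos_of_nbar_eq_zero h0).not_gt h

lemma tbar_mul_nbar_le_gap (hnbar : 0 < nbar f) (j : Fin N) {k l : Fin L} (hkl : k ≠ l) :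
    tbar f a q p * nbar f ≤ gap f a q p j k l := by
  have htau : tbar f a q p ≤ tauMin f a q p j := by
    refine csInf_le (Set.Finite.bddBelow ?_) ⟨j, rfl⟩
    exact (Set.finite_range (tauMin f a q p)).subset (by rintro _ ⟨j, rfl⟩; exact ⟨j, rfl⟩)
  have hgap : tauMin f a q p j ≤ gap f a q p j k l / nbar f := by
    refine csInf_le (Set.Finite.bddBelow ?_) ⟨k, l, hkl, rfl⟩
    exact (Set.finite_range fun kl : Fin L × Fin L => gap f a q p j kl.1 kl.2 / nbar f).subset
      (by rintro _ ⟨k, l, -, rfl⟩; exact ⟨(k, l), rfl⟩)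
  exact (le_div_iff₀ hnbar).mp (htau.trans hgap)

section ConditionalLaw

variable {i : Fin M} {j : Fin N} {k : Fin L}

lemma condLaw_zero : condLaw q p i j k 0 = 1 - q i j := dif_pos rfl

lemma condLaw_succ (h : Fin L) : condLaw q p i j k h.succ = q i j * p i k h := by
  rw [condLaw, dif_neg h.succ_ne_zero, Fin.pred_succ]

lemma condLaw_nonneg (hq0 : 0 ≤ q i j) (hq1 : q i j ≤ 1) (hp0 : ∀ h, 0 ≤ p i k h)
    (x : Fin (L + 1)) : 0 ≤ condLaw q p i j k x := by
  cases x using Fin.cases with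
  | zero => rw [condLaw_zero]; linarith
  | succ h => rw [condLaw_succ]; exact mul_nonneg hq0 (hp0 h)

lemma sum_condLaw (hp1 : ∑ h, p i k h = 1) : ∑ x, condLaw q p i j k x = 1 := by
  simp only [Fin.sum_univ_succ, condLaw_zero, condLaw_succ, ← Finset.mul_sum, hp1]
  ring

lemma integral_condLaw_sub (hf0 : ∀ k k', f i k 0 = f i k' 0) (hq0 : 0 ≤ q i j)
    (hq1 : q i j ≤ 1) (hp0 : ∀ h, 0 ≤ p i k h) (l : Fin L) :
    ∫ x, (f i l x - f i k x) ∂weightedDirac (condLaw q p i j k)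
      = -∑ h : Fin L, q i j * (f i k h.succ - f i l h.succ) * p i k h := by
  rw [integral_weightedDirac (condLaw_nonneg hq0 hq1 hp0), Fin.sum_univ_succ, hf0 l k,
    sub_self, mul_zero, zero_add, ← Finset.sum_neg_distrib]
  refine Finset.sum_congr rfl fun h _ => ?_
  rw [condLaw_succ]
  ring

end ConditionalLaw

structure IsConfusionModel (q : Fin M → Fin N → ℝ) (p : Fin M → Fin L → Fin L → ℝ) : Prop where
  q_nonneg : ∀ i j, 0 ≤ q i j
  q_le_one : ∀ i j, q i j ≤ 1
  p_nonneg : ∀ i k h, 0 ≤ p i k h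
  sum_p : ∀ i k, ∑ h, p i k h = 1

def labelLaw (q : Fin M → Fin N → ℝ) (p : Fin M → Fin L → Fin L → ℝ) (j : Fin N) (k : Fin L) :
    Measure (Fin M → Fin (L + 1)) :=
  Measure.pi fun i => weightedDirac (condLaw q p i j k)

namespace IsConfusionModel

lemma condLaw_nonneg (hqp : IsConfusionModel q p) (i : Fin M) (j : Fin N) (k : Fin L)
    (x : Fin (L + 1)) : 0 ≤ condLaw q p i j k x :=
  CrowdDS.condLaw_nonneg (hqp.q_nonneg i j) (hqp.q_le_one i j) (hqp.p_nonneg i k) x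

lemma isProbabilityMeasure_condLaw (hqp : IsConfusionModel q p) (i : Fin M) (j : Fin N)
    (k : Fin L) : IsProbabilityMeasure (weightedDirac (condLaw q p i j k)) :=
  isProbabilityMeasure_weightedDirac (hqp.condLaw_nonneg i j k) (sum_condLaw (hqp.sum_p i k))

lemma sum_integral_add_gap (hqp : IsConfusionModel q p) (hf0 : ∀ i k k', f i k 0 = f i k' 0)
    (j : Fin N) (k l : Fin L) :
    (∑ i, ∫ x, (f i l x - f i k x) ∂weightedDirac (condLaw q p i j k)) + gap f a q p j k l
      = a k - a l := by
  simp only [gap, integral_condLaw_sub (hf0 _) (hqp.q_nonneg _ j) (hqp.q_le_one _ j)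
    (hqp.p_nonneg _ k), Finset.sum_neg_distrib]
  ring

lemma labelLaw_real_score_le_le_phi (hqp : IsConfusionModel q p)
    (hf0 : ∀ i k k', f i k 0 = f i k' 0) (hnbar : 0 < nbar f) (htbar : 0 ≤ tbar f a q p)
    (j : Fin N) {k l : Fin L} (hkl : k ≠ l) :
    (labelLaw q p j k).real {η | score f a η k ≤ score f a η l} ≤ phi (tbar f a q p) := by
  have := hqp.isProbabilityMeasure_condLaw
  have hgap := tbar_mul_nbar_le_gap (a := a) (q := q) (p := p) hnbar j hkl
  have hevent : {η | score f a η k ≤ score f a η l}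
      = {η | (∑ i, ∫ x, (f i l x - f i k x) ∂weightedDirac (condLaw q p i j k))
          + gap f a q p j k l ≤ ∑ i, (f i l (η i) - f i k (η i))} := by
    ext η
    rw [Set.mem_ofPred_eq, Set.mem_ofPred_eq, hqp.sum_integral_add_gap hf0, score, score,
      Finset.sum_sub_distrib]
    constructor <;> intro h <;> linarith
  have hnbar_sq : ∑ i, spread f i ^ 2 = nbar f ^ 2 := by
    rw [nbar_eq_sqrt_sum_spread_sq, sq_sqrt (Finset.sum_nonneg fun i _ => sq_nonneg _)]
  rw [hevent]
  refine (measureReal_pi_sum_ge_le (fun i => measurable_of_finite _)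
    (fun i => abs_sub_le_spread (hf0 i) hkl.symm) ((mul_nonneg htbar hnbar.le).trans hgap)).trans ?_
  rw [hnbar_sq, phi, exp_le_exp, neg_div, neg_div, neg_le_neg_iff, le_div_iff₀ (by positivity)]
  calc tbar f a q p ^ 2 / 2 * (2 * nbar f ^ 2) = (tbar f a q p * nbar f) ^ 2 := by ring
    _ ≤ gap f a q p j k l ^ 2 := pow_le_pow_left₀ (mul_nonneg htbar hnbar.le) hgap 2

section Items

variable {Ω : Type*} [MeasurableSpace Ω] {μ : Measure Ω} {y : Fin N → Ω → Fin L}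
  {Z : Fin M → Fin N → Ω → Fin (L + 1)} {pri : Fin L → ℝ}

lemma map_restrict_label_eq [IsFiniteMeasure μ] (hqp : IsConfusionModel q p)
    (hZm : ∀ i j, Measurable (Z i j)) (hpri : ∀ k, 0 ≤ pri k)
    (hlaw : ∀ (j : Fin N) (k : Fin L) (h : Fin M → Fin (L + 1)),
      (μ {ω | y j ω = k ∧ ∀ i, Z i j ω = h i}).toReal = pri k * ∏ i, condLaw q p i j k (h i))
    (j : Fin N) (k : Fin L) :
    (μ.restrict {ω | y j ω = k}).map (fun ω i => Z i j ω)
      = ENNReal.ofReal (pri k) • labelLaw q p j k := by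
  have hZj : Measurable fun ω i => Z i j ω := measurable_pi_lambda _ fun i => hZm i j
  refine ext_of_singleton fun η => ?_
  have hfiber : (fun ω i => Z i j ω) ⁻¹' {η} ∩ {ω | y j ω = k}
      = {ω | y j ω = k ∧ ∀ i, Z i j ω = η i} := by
    ext ω
    simp [funext_iff, and_comm]
  rw [map_apply hZj (measurableSet_singleton η), restrict_apply (hZj (measurableSet_singleton η)),
    hfiber, Measure.smul_apply, labelLaw, ← Set.univ_pi_singleton, pi_pi, ← ofReal_measureReal,
    measureReal_def, hlaw, ENNReal.ofReal_mul (hpri k), smul_eq_mul,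
    ENNReal.ofReal_prod_of_nonneg fun i _ => hqp.condLaw_nonneg i j k (η i)]
  simp_rw [weightedDirac_singleton]

lemma measureReal_label_eq_and_mem [IsFiniteMeasure μ] (hqp : IsConfusionModel q p)
    (hZm : ∀ i j, Measurable (Z i j)) (hpri : ∀ k, 0 ≤ pri k)
    (hlaw : ∀ (j : Fin N) (k : Fin L) (h : Fin M → Fin (L + 1)),
      (μ {ω | y j ω = k ∧ ∀ i, Z i j ω = h i}).toReal = pri k * ∏ i, condLaw q p i j k (h i))
    (j : Fin N) (k : Fin L) (S : Set (Fin M → Fin (L + 1))) :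
    μ.real {ω | y j ω = k ∧ (fun i => Z i j ω) ∈ S}
      = μ.real {ω | y j ω = k} * (labelLaw q p j k).real S := by
  have := hqp.isProbabilityMeasure_condLaw
  have hZj : Measurable fun ω i => Z i j ω := measurable_pi_lambda _ fun i => hZm i j
  have hlabel : ∀ S : Set (Fin M → Fin (L + 1)),
      μ.real {ω | y j ω = k ∧ (fun i => Z i j ω) ∈ S} = pri k * (labelLaw q p j k).real S := by
    intro S
    have hS : MeasurableSet S := S.to_countable.measurableSet
    have := congrArg (fun ν => ν.real S) (hqp.map_restrict_label_eq hZm hpri hlaw j k)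
    simp only [map_measureReal_apply hZj hS, measureReal_restrict_apply (hZj hS),
      measureReal_ennreal_smul_apply, ENNReal.toReal_ofReal (hpri k)] at this
    rw [← this, Set.inter_comm]
    rfl
  have huniv := hlabel Set.univ
  simp only [Set.mem_univ, and_true, labelLaw, probReal_univ, mul_one] at huniv
  rw [hlabel, huniv]

lemma measureReal_outranked_le [IsProbabilityMeasure μ] (hqp : IsConfusionModel q p)
    (hym : ∀ j, Measurable (y j)) (hZm : ∀ i j, Measurable (Z i j)) (hpri : ∀ k, 0 ≤ pri k)
    (hlaw : ∀ (j : Fin N) (k : Fin L) (h : Fin M → Fin (L + 1)),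
      (μ {ω | y j ω = k ∧ ∀ i, Z i j ω = h i}).toReal = pri k * ∏ i, condLaw q p i j k (h i))
    (hf0 : ∀ i k k', f i k 0 = f i k' 0) (hnbar : 0 < nbar f) (htbar : 0 ≤ tbar f a q p)
    (j : Fin N) :
    μ.real {ω | Outranked f a (y j ω) (fun i => Z i j ω)} ≤ (L - 1) * phi (tbar f a q p) := by
  classical
  set E : Fin L → Fin L → Set Ω := fun k l =>
    {ω | y j ω = k ∧ (fun i => Z i j ω) ∈ {η | score f a η k ≤ score f a η l}}
  have hsub : {ω | Outranked f a (y j ω) (fun i => Z i j ω)}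
      ⊆ ⋃ k ∈ Finset.univ, ⋃ l ∈ Finset.univ.erase k, E k l := by
    rintro ω ⟨l, hl, hle⟩
    simp only [Set.mem_iUnion, Finset.mem_univ, Finset.mem_erase, exists_true_left]
    exact ⟨y j ω, l, ⟨hl, trivial⟩, rfl, hle⟩
  have hpartition : ∑ k, μ.real {ω | y j ω = k} = 1 := by
    have := sum_measureReal_preimage_singleton (μ := μ) Finset.univ
      (fun k _ => hym j (measurableSet_singleton k)) fun k _ => measure_ne_top _ _
    rwa [Finset.coe_univ, Set.preimage_univ, probReal_univ] at this
  calc μ.real {ω | Outranked f a (y j ω) (fun i => Z i j ω)}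
      ≤ ∑ k, ∑ l ∈ Finset.univ.erase k, μ.real (E k l) :=
        (measureReal_mono hsub (measure_ne_top _ _)).trans <|
          (measureReal_biUnion_finset_le _ _).trans <|
            Finset.sum_le_sum fun k _ => measureReal_biUnion_finset_le _ _
    _ ≤ ∑ k, ∑ l ∈ Finset.univ.erase k, μ.real {ω | y j ω = k} * phi (tbar f a q p) := by
        gcongr with k _ l hl
        rw [hqp.measureReal_label_eq_and_mem hZm hpri hlaw]
        exact mul_le_mul_of_nonneg_left (hqp.labelLaw_real_score_le_le_phi hf0 hnbar htbar j
          (Finset.mem_erase.mp hl).1.symm) measureReal_nonneg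
    _ = (∑ k, μ.real {ω | y j ω = k}) * ((L - 1) * phi (tbar f a q p)) := by
        rw [Finset.sum_mul]
        refine Finset.sum_congr rfl fun k _ => ?_
        rw [Finset.sum_const, Finset.card_erase_of_mem (Finset.mem_univ _), Finset.card_univ,
          Fintype.card_fin, nsmul_eq_mul, Nat.cast_pred k.pos]
        ring
    _ = (L - 1) * phi (tbar f a q p) := by
        rw [hpartition, one_mul]

end Items

end IsConfusionModel

lemma compl_setOf_errRate_le_subset {Ω : Type*} {y yhat : Fin N → Ω → Fin L}
    {Z : Fin M → Fin N → Ω → Fin (L + 1)} (hN : 0 < N)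
    (hyhat : ∀ j ω k, score f a (fun i => Z i j ω) k ≤ score f a (fun i => Z i j ω) (yhat j ω))
    (ε : ℝ) :
    {ω | errRate y yhat ω ≤ ε}ᶜ
      ⊆ {ω | N * ε ≤ ∑ j, {ω | Outranked f a (y j ω) (fun i => Z i j ω)}.indicator 1 ω} := by
  intro ω hω
  rw [Set.mem_compl_iff, Set.mem_ofPred_eq, not_le, errRate, inv_mul_eq_div,
    lt_div_iff₀ (by exact_mod_cast hN)] at hω
  refine (mul_comm (N : ℝ) ε ▸ hω).le.trans (Finset.sum_le_sum fun j _ => ?_)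
  split_ifs with hj
  · have hout : Outranked f a (y j ω) (fun i => Z i j ω) := ⟨yhat j ω, hj, hyhat j ω (y j ω)⟩
    exact (Set.indicator_of_mem (s := {ω | Outranked f a (y j ω) (fun i => Z i j ω)}) hout 1).ge
  · exact Set.indicator_nonneg (fun _ _ => zero_le_one) ω

end CrowdDS

open CrowdDS

theorem error_rate_upper_bound_prob_delta_general
    {Ω : Type*} [MeasurableSpace Ω] (μ : Measure Ω) [IsProbabilityMeasure μ]
    {M N L : ℕ} (hN : 0 < N) (hL : 2 ≤ L)
    (y : Fin N → Ω → Fin L) (Z : Fin M → Fin N → Ω → Fin (L + 1))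
    (hym : ∀ j, Measurable (y j)) (hZm : ∀ i j, Measurable (Z i j))
    (pri : Fin L → ℝ) (q : Fin M → Fin N → ℝ) (p : Fin M → Fin L → Fin L → ℝ)
    (hpri : ∀ k, 0 ≤ pri k) (hq0 : ∀ i j, 0 ≤ q i j) (hq1 : ∀ i j, q i j ≤ 1)
    (hp0 : ∀ i k h, 0 ≤ p i k h) (hp1 : ∀ i k, ∑ h, p i k h = 1)
    (hlaw : ∀ (j : Fin N) (k : Fin L) (h : Fin M → Fin (L + 1)),
      (μ {ω | y j ω = k ∧ ∀ i, Z i j ω = h i}).toReal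
        = pri k * ∏ i, CrowdDS.condLaw q p i j k (h i))
    (hindep : iIndepFun (fun j ω => (y j ω, fun i => Z i j ω)) μ)
    (f : Fin M → Fin L → Fin (L + 1) → ℝ) (hf0 : ∀ i k k', f i k 0 = f i k' 0)
    (a : Fin L → ℝ)
    (yhat : Fin N → Ω → Fin L)
    (hyhat : ∀ (j : Fin N) (ω : Ω) (k : Fin L),
      (∑ i, f i k (Z i j ω)) + a k ≤ (∑ i, f i (yhat j ω) (Z i j ω)) + a (yhat j ω))
    {ε δ : ℝ} (hε0 : 0 < ε) (hε1 : ε < 1) (hδ0 : 0 < δ) (hδ1 : δ < 1)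
    (ht : Real.sqrt (2 * Real.log (((L : ℝ) - 1) *
        (1 + Real.exp (((-ε * Real.log ε - (1 - ε) * Real.log (1 - ε))
          + (N : ℝ)⁻¹ * Real.log (1 / δ)) / ε))))
      ≤ CrowdDS.tbar f a q p) :
    1 - δ ≤ (μ {ω | CrowdDS.errRate y yhat ω ≤ ε}).toReal := by
  set C := 1 + exp (((-ε * log ε - (1 - ε) * log (1 - ε)) + (N : ℝ)⁻¹ * log (1 / δ)) / ε)
    with hC_def
  have hC : 1 < C := lt_add_of_pos_right 1 (exp_pos _)
  have hlogC : ((-ε * log ε - (1 - ε) * log (1 - ε)) + (N : ℝ)⁻¹ * log (1 / δ)) / ε ≤ log C :=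
    (le_log_iff_exp_le (by linarith)).mpr (by linarith)
  have hL1 : (1 : ℝ) ≤ L - 1 := by
    have : (2 : ℝ) ≤ L := by exact_mod_cast hL
    linarith
  have htbar : 0 < tbar f a q p :=
    (sqrt_pos.mpr (by nlinarith [log_pos (one_lt_mul hL1 hC)])).trans_le ht
  have hphi : ((L : ℝ) - 1) * phi (tbar f a q p) ≤ 1 / C := by
    calc ((L : ℝ) - 1) * phi (tbar f a q p) ≤ (L - 1) * ((L - 1) * C)⁻¹ :=
          mul_le_mul_of_nonneg_left (phi_le_inv_of_sqrt_two_log_le (by positivity) ht)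
            (by linarith)
      _ = 1 / C := by field_simp
  set B : Fin N → Set Ω := fun j => {ω | Outranked f a (y j ω) (fun i => Z i j ω)}
  have hOutranked : MeasurableSet {kη : Fin L × (Fin M → Fin (L + 1)) | Outranked f a kη.1 kη.2} :=
    Set.to_countable _ |>.measurableSet
  have hB : ∀ j, MeasurableSet (B j) := fun j =>
    (hym j).prodMk (measurable_pi_lambda _ fun i => hZm i j) hOutranked
  have hBp : ∀ j, μ.real (B j) ≤ 1 / C := fun j =>
    (IsConfusionModel.measureReal_outranked_le ⟨hq0, hq1, hp0, hp1⟩ hym hZm hpri hlaw hf0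
      (nbar_pos_of_tbar_pos htbar) htbar.le j).trans hphi
  have hchernoff := measureReal_sum_indicator_ge_le_exp_klBer hB
    (hindep.indicator_preimage fun _ => hOutranked) (by positivity)
    (one_div_le_of_div_le_log hε0 hε1 hδ0 hδ1.le (by positivity) hlogC) hε1 hBp
  rw [Fintype.card_fin] at hchernoff
  calc 1 - δ ≤ 1 - μ.real {ω | N * ε ≤ ∑ j, (B j).indicator 1 ω} := by
        linarith [exp_neg_mul_klBer_le hN hε0 hε1 hδ0 hC hlogC]
    _ ≤ μ.real {ω | errRate y yhat ω ≤ ε} :=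
        one_sub_measureReal_le_of_compl_subset (compl_setOf_errRate_le_subset hN hyhat ε)

/-- Under the general Dawid–Skene model with a decomposable aggregation
rule: for all `ε, δ ∈ (0,1)`, with `A = H(ε) + (1/N)·ln(1/δ)` and `C = 1 + exp(A/ε)`,
if `t̄ ≥ sqrt(2 ln((L−1)·C))`, then `E_N ≤ ε` with probability at least `1 − δ`. -/
theorem error_rate_upper_bound_prob_delta
    {Ω : Type*} [MeasurableSpace Ω] (μ : Measure Ω) [IsProbabilityMeasure μ]
    {M N L : ℕ} (hM : 0 < M) (hN : 0 < N) (hL : 2 ≤ L)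
    (y : Fin N → Ω → Fin L) (Z : Fin M → Fin N → Ω → Fin (L + 1))
    (hym : ∀ j, Measurable (y j)) (hZm : ∀ i j, Measurable (Z i j))
    (pri : Fin L → ℝ) (q : Fin M → Fin N → ℝ) (p : Fin M → Fin L → Fin L → ℝ)
    (hpri : ∀ k, 0 ≤ pri k) (hq0 : ∀ i j, 0 ≤ q i j) (hq1 : ∀ i j, q i j ≤ 1)
    (hp0 : ∀ i k h, 0 ≤ p i k h) (hp1 : ∀ i k, ∑ h, p i k h = 1)
    (hprior : ∀ (j : Fin N) (k : Fin L), (μ {ω | y j ω = k}).toReal = pri k)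
    (hlaw : ∀ (j : Fin N) (k : Fin L) (h : Fin M → Fin (L + 1)),
      (μ {ω | y j ω = k ∧ ∀ i, Z i j ω = h i}).toReal
        = pri k * ∏ i, CrowdDS.condLaw q p i j k (h i))
    (hindep : iIndepFun (fun j ω => (y j ω, fun i => Z i j ω)) μ)
    (f : Fin M → Fin L → Fin (L + 1) → ℝ) (hf0 : ∀ i k k', f i k 0 = f i k' 0)
    (a : Fin L → ℝ)
    (yhat : Fin N → Ω → Fin L) (hyhatm : ∀ j, Measurable (yhat j))
    (hyhat : ∀ (j : Fin N) (ω : Ω) (k : Fin L),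
      (∑ i, f i k (Z i j ω)) + a k ≤ (∑ i, f i (yhat j ω) (Z i j ω)) + a (yhat j ω))
    {ε δ : ℝ} (hε0 : 0 < ε) (hε1 : ε < 1) (hδ0 : 0 < δ) (hδ1 : δ < 1)
    (ht : Real.sqrt (2 * Real.log (((L : ℝ) - 1) *
        (1 + Real.exp (((-ε * Real.log ε - (1 - ε) * Real.log (1 - ε))
          + (N : ℝ)⁻¹ * Real.log (1 / δ)) / ε))))
      ≤ CrowdDS.tbar f a q p) :
    1 - δ ≤ (μ {ω | CrowdDS.errRate y yhat ω ≤ ε}).toReal :=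
  error_rate_upper_bound_prob_delta_general μ hN hL y Z hym hZm pri q p hpri hq0 hq1 hp0 hp1 hlaw
    hindep f hf0 a yhat hyhat hε0 hε1 hδ0 hδ1 ht
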